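/- Let ε ∈ (11/12, 1), let T be an infinite square-free string over the alphabet {1,2,3}, and let S be an infinite binary weak (12ε−11)-synchronization string over {0,1}. Let W be the infinite string over {1,2,3,4} that agrees with T except that, for each i, the i-th occurrence of the symbol 1 in T is replaced by the symbol 4 if and only if S[i] = 1. Then W is an infinite ε-synchronization string over an alphabet of size four. -/

import Mathlib

/-- The length of a longest common subsequence of two strings (lists). -/
noncomputable def lcsLen {α : Type*} (S T : List α) : ℕ :=
  sSup {n | ∃ U : List α, U.length = n ∧ U.Sublist S ∧ U.Sublist T}

/-- The edit distance (insertions/deletions) between two strings, via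
`ED(S,T) = |S| + |T| - 2·LCS(S,T)`. -/
noncomputable def editDistance {α : Type*} (S T : List α) : ℕ :=
  S.length + T.length - 2 * lcsLen S T

/-- `strSlice S a b` is the substring `S[a, b)` of `S` (1-indexed, `b` excluded). -/
def strSlice {α : Type*} (S : List α) (a b : ℕ) : List α :=
  (S.drop (a - 1)).take (b - a)

/-- `islice f a b` is the substring `f[a, b)` of the infinite string `f`
(1-indexed, `b` excluded). -/
def islice {α : Type*} (f : ℕ → α) (a b : ℕ) : List α :=
  (List.range (b - a)).map fun t => f (a + t)

/-- `S` is an ε-synchronization string: for all `1 ≤ i < j < k ≤ |S| + 1`,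
`ED(S[i,j), S[j,k)) > (1-ε)(k-i)`. -/
def IsSyncString {α : Type*} (ε : ℝ) (S : List α) : Prop :=
  ∀ i j k : ℕ, 1 ≤ i → i < j → j < k → k ≤ S.length + 1 →
    (1 - ε) * ((k : ℝ) - (i : ℝ)) < (editDistance (strSlice S i j) (strSlice S j k) : ℝ)

/-- `S` is an ε-synchronization circle: every cyclic rotation of `S` is an
ε-synchronization string. -/
def IsSyncCircle {α : Type*} (ε : ℝ) (S : List α) : Prop :=
  ∀ i : ℕ, 1 ≤ i → i ≤ S.length → IsSyncString ε (S.rotate (i - 1))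

/-- An infinite ε-synchronization string (1-indexed). -/
def IsInfSyncString {α : Type*} (ε : ℝ) (f : ℕ → α) : Prop :=
  ∀ i j k : ℕ, 1 ≤ i → i < j → j < k →
    (1 - ε) * ((k : ℝ) - (i : ℝ)) < (editDistance (islice f i j) (islice f j k) : ℝ)

/-- `S` is a `c`-long-distance ε-synchronization string: for all
`1 ≤ i < j ≤ i' < j' ≤ |S| + 1` with `l = (j-i)+(j'-i')`, if the two intervals
are adjacent (`i' = j`) or `l > c · log |S|`, then
`ED(S[i,j), S[i',j')) > (1-ε)·l`. -/
noncomputable def IsLongDistSyncString {α : Type*} (c ε : ℝ) (S : List α) : Prop :=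
  ∀ i j i' j' : ℕ, 1 ≤ i → i < j → j ≤ i' → i' < j' → j' ≤ S.length + 1 →
    (i' = j ∨ c * Real.log (S.length : ℝ) < ((j : ℝ) - i) + ((j' : ℝ) - i')) →
    (1 - ε) * (((j : ℝ) - i) + ((j' : ℝ) - i')) <
      (editDistance (strSlice S i j) (strSlice S i' j') : ℝ)

/-- An infinite weak ε-synchronization string: for all `1 ≤ i < j < k`,
`ED(S[i,j), S[j,k)) ≥ ⌊(1-ε)(k-i)⌋`. -/
def IsInfWeakSyncString {α : Type*} (ε : ℝ) (f : ℕ → α) : Prop :=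
  ∀ i j k : ℕ, 1 ≤ i → i < j → j < k →
    ((⌊(1 - ε) * ((k : ℝ) - (i : ℝ))⌋ : ℤ) : ℝ) ≤
      (editDistance (islice f i j) (islice f j k) : ℝ)

/-!
Erasing the marks (`4 ↦ 1`) sends `W` onto the square-free word `T`, so adjacent
windows of `W` always differ. Keeping only the marked letters (`1 ↦ 0`, `4 ↦ 1`)
sends a window of `W` onto the window of `S` indexed by the `1`s it contains, and
deleting letters never increases edit distance. Since a square-free ternary word
has a `1` in every four consecutive letters, a window of length `K` carries at least
`(K - 3) / 4` letters of `S`, and the weak `(12ε - 11)`-synchronization of `S`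
then yields an edit distance above `(1 - ε) K`.
-/

section EditDistance

variable {α β : Type*}

lemma lcsLen_bddAbove (S T : List α) :
    BddAbove {n | ∃ U : List α, U.length = n ∧ U.Sublist S ∧ U.Sublist T} :=
  ⟨S.length, fun _ ⟨_, hU, hUS, _⟩ => hU ▸ hUS.length_le⟩

lemma List.Sublist.length_le_lcsLen {S T U : List α} (hS : U.Sublist S) (hT : U.Sublist T) :
    U.length ≤ lcsLen S T :=
  le_csSup (lcsLen_bddAbove S T) ⟨U, rfl, hS, hT⟩

lemma exists_sublist_length_eq_lcsLen (S T : List α) :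
    ∃ U : List α, U.length = lcsLen S T ∧ U.Sublist S ∧ U.Sublist T :=
  Nat.sSup_mem (s := {n | ∃ U : List α, U.length = n ∧ U.Sublist S ∧ U.Sublist T})
    ⟨0, [], rfl, List.nil_sublist _, List.nil_sublist _⟩ (lcsLen_bddAbove S T)

@[simp]
lemma editDistance_nil_left (T : List α) : editDistance [] T = T.length := by
  obtain ⟨_, hU, hUS, -⟩ := exists_sublist_length_eq_lcsLen ([] : List α) T
  have := hUS.length_le
  simp only [editDistance, List.length_nil] at this ⊢
  omega

@[simp]
lemma editDistance_nil_right (S : List α) : editDistance S [] = S.length := by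
  obtain ⟨_, hU, -, hUT⟩ := exists_sublist_length_eq_lcsLen S ([] : List α)
  have := hUT.length_le
  simp only [editDistance, List.length_nil] at this ⊢
  omega

lemma eq_of_editDistance_eq_zero {S T : List α} (h : editDistance S T = 0) : S = T := by
  obtain ⟨U, hU, hUS, hUT⟩ := exists_sublist_length_eq_lcsLen S T
  have hS := hUS.length_le
  have hT := hUT.length_le
  unfold editDistance at h
  exact (hUS.eq_of_length (by omega)).symm.trans (hUT.eq_of_length (by omega))

lemma List.Sublist.length_add_length_filterMap_le (g : α → Option β) {l l' : List α}
    (h : l.Sublist l') :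
    l.length + (l'.filterMap g).length ≤ l'.length + (l.filterMap g).length := by
  induction h with
  | slnil => simp
  | @cons l₁ l₂ a _ ih =>
    have : ((a :: l₂).filterMap g).length ≤ (l₂.filterMap g).length + 1 := by
      rw [List.filterMap_cons]; cases g a <;> simp
    simp only [List.length_cons]
    omega
  | @cons_cons l₁ l₂ a _ ih =>
    simp only [List.filterMap_cons, List.length_cons]
    cases g a <;> simp <;> omega

/-- Each letter that `filterMap` deletes from a string costs at most the one deletion
that an optimal alignment would have spent on it anyway. -/
lemma editDistance_filterMap_le (g : α → Option β) (S T : List α) :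
    editDistance (S.filterMap g) (T.filterMap g) ≤ editDistance S T := by
  obtain ⟨U, hU, hUS, hUT⟩ := exists_sublist_length_eq_lcsLen S T
  have hS := hUS.length_add_length_filterMap_le g
  have hT := hUT.length_add_length_filterMap_le g
  have hlcs := (hUS.filterMap g).length_le_lcsLen (hUT.filterMap g)
  have := hUS.length_le
  have := hUT.length_le
  unfold editDistance
  omega

lemma editDistance_map_le (g : α → β) (S T : List α) :
    editDistance (S.map g) (T.map g) ≤ editDistance S T := by
  simpa only [List.filterMap_eq_map] using editDistance_filterMap_le (some ∘ g) S T

end EditDistance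

section Slices

variable {α : Type*}

@[simp]
lemma islice_length (f : ℕ → α) (a b : ℕ) : (islice f a b).length = b - a := by
  simp [islice]

@[simp]
lemma islice_self (f : ℕ → α) (a : ℕ) : islice f a a = [] := by
  simp [islice]

lemma islice_succ (f : ℕ → α) {a b : ℕ} (h : a ≤ b) :
    islice f a (b + 1) = islice f a b ++ [f b] := by
  rw [islice, show b + 1 - a = b - a + 1 by omega, List.range_succ, List.map_append]
  simp [show a + (b - a) = b by omega, islice]

lemma islice_map_of_eqOn {β : Type*} {f : ℕ → α} {g : α → β} {h : ℕ → β} {a : ℕ}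
    (hfg : ∀ p, a ≤ p → g (f p) = h p) (b : ℕ) :
    (islice f a b).map g = islice h a b := by
  simp only [islice, List.map_map]
  exact List.map_congr_left fun t _ => hfg _ (Nat.le_add_right a t)

/-- The degenerate windows `i = j` and `j = k` hold because `1 - ε ≤ 1`. -/
lemma IsInfWeakSyncString.floor_le_editDistance {ε : ℝ} {f : ℕ → α}
    (hf : IsInfWeakSyncString ε f) (hε : 0 ≤ ε) {i j k : ℕ} (hi : 1 ≤ i) (hij : i ≤ j)
    (hjk : j ≤ k) :
    ((⌊(1 - ε) * ((k : ℝ) - i)⌋ : ℤ) : ℝ) ≤ (editDistance (islice f i j) (islice f j k) : ℝ) := by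
  have hfloor : ((⌊(1 - ε) * ((k : ℝ) - i)⌋ : ℤ) : ℝ) ≤ (k : ℝ) - i := by
    have hki : (i : ℝ) ≤ k := by exact_mod_cast hij.trans hjk
    nlinarith [Int.floor_le ((1 - ε) * ((k : ℝ) - i))]
  rcases hij.eq_or_lt with rfl | hij
  · simpa [Nat.cast_sub hjk] using hfloor
  rcases hjk.eq_or_lt with rfl | hjk
  · simpa [Nat.cast_sub hij.le] using hfloor
  exact hf i j k hi hij hjk

end Slices

def IsInfSquareFree {α : Type*} (f : ℕ → α) : Prop :=
  ∀ i l : ℕ, 1 ≤ i → 1 ≤ l → islice f i (i + l) ≠ islice f (i + l) (i + 2 * l)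

lemma IsInfSquareFree.editDistance_pos {α : Type*} {f : ℕ → α} (hf : IsInfSquareFree f)
    {i j k : ℕ} (hi : 1 ≤ i) (hij : i < j) (hjk : j < k) :
    0 < editDistance (islice f i j) (islice f j k) := by
  by_contra h
  have heq := eq_of_editDistance_eq_zero (Nat.eq_zero_of_not_pos h)
  have hlen := congrArg List.length heq
  simp only [islice_length] at hlen
  obtain ⟨l, rfl⟩ : ∃ l, j = i + l := ⟨j - i, by omega⟩
  obtain rfl : k = i + 2 * l := by omega
  exact hf i l hi (by omega) heq

lemma IsInfSquareFree.exists_notMem_pair {α : Type*} {f : ℕ → α} (hf : IsInfSquareFree f)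
    (x y : α) {a : ℕ} (ha : 1 ≤ a) : ∃ p, a ≤ p ∧ p < a + 4 ∧ f p ∉ ({x, y} : Set α) := by
  by_contra! hxy
  have hsq1 : ∀ b, 1 ≤ b → f b ≠ f (b + 1) := fun b hb => by
    simpa [islice] using hf b 1 hb le_rfl
  have hsq2 : f a = f (a + 2) → f (a + 1) ≠ f (a + 3) := by
    simpa [islice, List.range_succ] using hf a 2 ha (by omega)
  have h0 := hxy a le_rfl (by omega)
  have h1 := hxy (a + 1) (by omega) (by omega)
  have h2 := hxy (a + 2) (by omega) (by omega)
  have h3 := hxy (a + 3) (by omega) (by omega)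
  have := hsq1 a ha
  have : f (a + 1) ≠ f (a + 2) := hsq1 (a + 1) (by omega)
  have : f (a + 2) ≠ f (a + 3) := hsq1 (a + 2) (by omega)
  simp only [Set.mem_insert_iff, Set.mem_singleton_iff] at h0 h1 h2 h3
  rcases h0 with h0 | h0 <;> rcases h1 with h1 | h1 <;> rcases h2 with h2 | h2 <;>
    rcases h3 with h3 | h3 <;> simp_all

lemma IsInfSquareFree.exists_eq_one_of_ternary {T : ℕ → ℕ} (hT : IsInfSquareFree T)
    (hrange : ∀ p : ℕ, 1 ≤ p → T p ∈ ({1, 2, 3} : Set ℕ)) {a : ℕ} (ha : 1 ≤ a) :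
    ∃ p, a ≤ p ∧ p < a + 4 ∧ T p = 1 := by
  obtain ⟨p, hap, hpa, hp⟩ := hT.exists_notMem_pair 2 3 ha
  have hTp := hrange p (ha.trans hap)
  simp only [Set.mem_insert_iff, Set.mem_singleton_iff] at hTp hp
  exact ⟨p, hap, hpa, by omega⟩

section Counting

variable (P : ℕ → Prop) [DecidablePred P]

def countUpTo (t : ℕ) : ℕ := ((Finset.Icc 1 t).filter P).card

lemma countUpTo_mono : Monotone (countUpTo P) := fun _ _ h =>
  Finset.card_le_card (Finset.filter_subset_filter _ (Finset.Icc_subset_Icc_right h))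

lemma countUpTo_succ (t : ℕ) :
    countUpTo P (t + 1) = countUpTo P t + if P (t + 1) then 1 else 0 := by
  simp only [countUpTo, Finset.card_filter]
  exact Finset.sum_Icc_succ_top (Nat.le_add_left 1 t) _

variable {P}

lemma le_mul_countUpTo_sub {d : ℕ} (hwin : ∀ a, 1 ≤ a → ∃ p, a ≤ p ∧ p < a + d ∧ P p)
    {i j : ℕ} (hi : 1 ≤ i) (hij : i ≤ j) :
    j - i + 1 ≤ d * (countUpTo P (j - 1) - countUpTo P (i - 1) + 1) := by
  induction h : j - i using Nat.strong_induction_on generalizing i with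
  | _ n ih =>
    by_cases hn : n < d
    · have : 1 ≤ countUpTo P (j - 1) - countUpTo P (i - 1) + 1 := by omega
      nlinarith
    obtain ⟨p, hip, hpd, hp⟩ := hwin i hi
    have hcount : countUpTo P (i - 1) + 1 ≤ countUpTo P (i + d - 1) := by
      have hp' : countUpTo P p = countUpTo P (p - 1) + 1 := by
        simpa [Nat.sub_add_cancel (show 1 ≤ p by omega), hp] using countUpTo_succ P (p - 1)
      have := countUpTo_mono P (show i - 1 ≤ p - 1 by omega)
      have := countUpTo_mono P (show p ≤ i + d - 1 by omega)
      omega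
    have hrest := ih (j - (i + d)) (by omega) (by omega) (by omega) rfl
    have := countUpTo_mono P (show i + d - 1 ≤ j - 1 by omega)
    have hle : countUpTo P (j - 1) - countUpTo P (i + d - 1) + 1
        ≤ countUpTo P (j - 1) - countUpTo P (i - 1) := by omega
    have := Nat.mul_le_mul_left d hle
    rw [Nat.mul_add, Nat.mul_one]
    omega

lemma filterMap_islice_eq_islice_countUpTo {α β : Type*} {f : ℕ → α} {g : α → Option β}
    {s : ℕ → β} (hg : ∀ p, 1 ≤ p → g (f p) = if P p then some (s (countUpTo P p)) else none)
    {i j : ℕ} (hi : 1 ≤ i) (hij : i ≤ j) :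
    (islice f i j).filterMap g = islice s (countUpTo P (i - 1) + 1) (countUpTo P (j - 1) + 1) := by
  induction j, hij using Nat.le_induction with
  | base => simp
  | succ j hij ih =>
    have hj : j - 1 + 1 = j := by omega
    have hcount := countUpTo_succ P (j - 1)
    rw [hj] at hcount
    have hmono := countUpTo_mono P (show i - 1 ≤ j - 1 by omega)
    rw [islice_succ f hij, List.filterMap_append, ih, Nat.add_sub_cancel]
    simp only [List.filterMap_cons, List.filterMap_nil, hg j (by omega)]
    split_ifs at hcount ⊢ with hP
    · rw [hcount, islice_succ s (show countUpTo P (i - 1) + 1 ≤ countUpTo P (j - 1) + 1 by omega)]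
    · simp [hcount]

end Counting

/-- Reads the bit of `S` that a letter of `W` carries, if any. -/
def markBit (n : ℕ) : Option Bool :=
  if n = 4 then some true else if n = 1 then some false else none

def eraseMark (n : ℕ) : ℕ :=
  if n = 4 then 1 else n

lemma eraseMark_markBit_of_marked {t w : ℕ} {b : Bool} (ht : t ∈ ({1, 2, 3} : Set ℕ))
    (hne : t ≠ 1 → w = t) (heq : t = 1 → w = if b then 4 else 1) :
    eraseMark w = t ∧ markBit w = if t = 1 then some b else none := by
  simp only [Set.mem_insert_iff, Set.mem_singleton_iff] at ht
  by_cases h1 : t = 1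
  · rw [heq h1, h1, if_pos rfl]
    cases b <;> exact ⟨rfl, rfl⟩
  · rw [hne h1, if_neg h1, eraseMark, markBit, if_neg (by omega), if_neg (by omega), if_neg h1]
    exact ⟨rfl, rfl⟩

lemma one_sub_mul_lt_of_density {ε : ℝ} (hε : 11 / 12 < ε) (hε1 : ε < 1) {i k a b E : ℕ}
    (hik : i ≤ k) (hab : a ≤ b) (hdens : k - i + 1 ≤ 4 * (b - a + 1)) (hsep : 1 ≤ E)
    (hbits : ((⌊(1 - (12 * ε - 11)) * (((b + 1 : ℕ) : ℝ) - ((a + 1 : ℕ) : ℝ))⌋ : ℤ) : ℝ) ≤ E) :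
    (1 - ε) * ((k : ℝ) - i) < E := by
  have hdens' : ((k - i + 1 : ℕ) : ℝ) ≤ ((4 * (b - a + 1) : ℕ) : ℝ) := by exact_mod_cast hdens
  have hsep' : (1 : ℝ) ≤ E := by exact_mod_cast hsep
  have hbits' := (Int.sub_one_lt_floor _).trans_le hbits
  push_cast [Nat.cast_sub hik, Nat.cast_sub hab] at hdens' hbits'
  by_contra! h
  have hK : 12 < (k : ℝ) - i := by nlinarith
  nlinarith

/-- Let `ε ∈ (11/12, 1)`, `T` an infinite square-free string over
`{1,2,3}`, and `S` an infinite binary weak `(12ε−11)`-synchronization string.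
If `W` agrees with `T` except that the `i`-th occurrence of the symbol `1` in
`T` is replaced by `4` exactly when `S[i] = 1`, then `W` is an infinite
ε-synchronization string (over the size-four alphabet `{1,2,3,4}`). -/
theorem modified_squarefree_isInfSyncString (ε : ℝ)
    (hε : 11 / 12 < ε) (hε1 : ε < 1)
    (T : ℕ → ℕ) (hTrange : ∀ p : ℕ, 1 ≤ p → T p ∈ ({1, 2, 3} : Set ℕ))
    (hsf : ∀ i l : ℕ, 1 ≤ i → 1 ≤ l →
      islice T i (i + l) ≠ islice T (i + l) (i + 2 * l))
    (S : ℕ → Bool) (hS : IsInfWeakSyncString (12 * ε - 11) S)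
    (W : ℕ → ℕ)
    (hW1 : ∀ p : ℕ, 1 ≤ p → T p ≠ 1 → W p = T p)
    (hW2 : ∀ p : ℕ, 1 ≤ p → T p = 1 →
      W p = if S (((Finset.Icc 1 p).filter fun q => T q = 1).card) = true
            then 4 else 1) :
    IsInfSyncString ε W := by
  intro i j k hi hij hjk
  set c := countUpTo fun q => T q = 1
  have hletter p hp := eraseMark_markBit_of_marked (hTrange p hp) (hW1 p hp) (hW2 p hp)
  have hsep : 1 ≤ editDistance (islice W i j) (islice W j k) := by
    have h := IsInfSquareFree.editDistance_pos hsf hi hij hjk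
    rw [← islice_map_of_eqOn fun p hp => (hletter p (hi.trans hp)).1,
      ← islice_map_of_eqOn fun p hp => (hletter p (hi.trans (hij.le.trans hp))).1] at h
    exact h.trans_le (editDistance_map_le _ _ _)
  have hmono : Monotone c := countUpTo_mono _
  have hbits := hS.floor_le_editDistance (by linarith) (i := c (i - 1) + 1) (j := c (j - 1) + 1)
    (k := c (k - 1) + 1) (by omega)
    (by have := hmono (show i - 1 ≤ j - 1 by omega); omega)
    (by have := hmono (show j - 1 ≤ k - 1 by omega); omega)
  have hmark := fun p (hp : 1 ≤ p) => (hletter p hp).2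
  rw [← filterMap_islice_eq_islice_countUpTo hmark hi hij.le,
    ← filterMap_islice_eq_islice_countUpTo hmark (by omega) hjk.le] at hbits
  have hdens := le_mul_countUpTo_sub
    (fun _ ha => IsInfSquareFree.exists_eq_one_of_ternary hsf hTrange ha) hi (hij.trans hjk).le
  exact one_sub_mul_lt_of_density hε hε1 (hij.trans hjk).le (hmono (by omega)) hdens hsep
    (hbits.trans (by exact_mod_cast editDistance_filterMap_le markBit _ _))
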